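/- arXiv:2508.03671 — 4 statements merged into one kernel-verified Lean document; each statement's English description precedes it below -/
import Mathlib

section
/- For every R > 0 and every x' ∈ (−R, R), the function (x, t) ↦ f₁(x, t; x') satisfies the one-dimensional heat equation ∂f/∂t(x, t) = (1/2) ∂²f/∂x²(x, t) at every point (x, t) with x ∈ (−R, R) and t > 0; in particular the time derivative and the second spatial derivative of the series exist at all such points. -/
/-!
Each mode `sin (ω y + φ) * exp (-ω² t / 2)` solves `∂ₜu = ½ ∂ᵧ²u`. For `t` bounded away from `0`
the Gaussian factor `exp (-ω² t / 2)` beats the factor `ω²` produced by two spatial derivatives or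
one time derivative, so all differentiated series are dominated by summable series and may be
differentiated term by term.
-/

open Real Filter Topology MeasureTheory

/-- Dirichlet heat kernel of the interval `(-R, R)` with source `x'`:
`f₁ R x' x t = ∑_{k≥1} (1/R) sin(kπ(x'+R)/(2R)) sin(kπ(x+R)/(2R)) exp(-λ_k t/2)`
with `λ_k = (kπ)²/(4R²)`. -/
noncomputable def f₁ (R x' x t : ℝ) : ℝ :=
  ∑' k : ℕ, (1 / R) * Real.sin (((k : ℝ) + 1) * π * (x' + R) / (2 * R)) *
    Real.sin (((k : ℝ) + 1) * π * (x + R) / (2 * R)) *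
    Real.exp (-((((k : ℝ) + 1) * π) ^ 2 / (4 * R ^ 2)) * t / 2)

theorem abs_pow_le_one_add_sq (ω : ℝ) {m : ℕ} (hm : m ≤ 2) : |ω| ^ m ≤ 1 + ω ^ 2 := by
  interval_cases m
  · simp [sq_nonneg]
  · nlinarith [sq_abs ω, abs_nonneg ω]
  · rw [sq_abs]; linarith

theorem summable_one_add_sq_mul_exp_neg_sq_mul {a s : ℝ} (ha : a ≠ 0) (hs : 0 < s) :
    Summable fun k : ℕ => (1 + ((k + 1) * a) ^ 2) * exp (-((k + 1) * a) ^ 2 * s) := by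
  have hr : 0 < a ^ 2 * s := by positivity
  have hbound : Summable fun n : ℕ => (1 + (n * a) ^ 2) * exp (-(n * a) ^ 2 * s) := by
    refine ((summable_pow_mul_exp_neg_nat_mul 0 hr).add
      ((summable_pow_mul_exp_neg_nat_mul 2 hr).mul_left (a ^ 2))).of_nonneg_of_le
      (fun n => by positivity) fun n => ?_
    have hn : (n : ℝ) ≤ (n : ℝ) ^ 2 := by
      rcases Nat.eq_zero_or_pos n with rfl | hn
      · simp
      · nlinarith [(Nat.one_le_cast (α := ℝ)).2 hn]
    have hexp : exp (-(n * a) ^ 2 * s) ≤ exp (-(a ^ 2 * s) * n) := by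
      rw [exp_le_exp]; nlinarith
    calc (1 + (n * a) ^ 2) * exp (-(n * a) ^ 2 * s)
        ≤ (1 + (n * a) ^ 2) * exp (-(a ^ 2 * s) * n) := by gcongr
      _ = _ := by ring
  simpa using (summable_nat_add_iff 1).2 hbound

theorem hasDerivAt_tsum_mul_comp_affine {f f' : ℝ → ℝ} {M : ℝ}
    (hf : ∀ θ, HasDerivAt f (f' θ) θ) (hf_le : ∀ θ, |f θ| ≤ M) (hf'_le : ∀ θ, |f' θ| ≤ M)
    {a ω φ : ℕ → ℝ} (ha : Summable fun k => |a k|) (haω : Summable fun k => |a k * ω k|)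
    (y : ℝ) :
    HasDerivAt (fun z => ∑' k, a k * f (ω k * z + φ k))
      (∑' k, a k * ω k * f' (ω k * y + φ k)) y := by
  refine hasDerivAt_tsum (g := fun k z => a k * f (ω k * z + φ k))
    (g' := fun k z => a k * ω k * f' (ω k * z + φ k)) (y₀ := 0)
    (haω.mul_left M) (fun k z => ?_) (fun k z => ?_) ?_ y
  · have hinner : HasDerivAt (fun z => ω k * z + φ k) (ω k) z := by
      simpa using ((hasDerivAt_id z).const_mul (ω k)).add_const (φ k)
    exact (((hf _).comp z hinner).const_mul (a k)).congr_deriv (by ring)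
  · rw [norm_eq_abs, abs_mul, mul_comm]
    exact mul_le_mul_of_nonneg_right (hf'_le _) (abs_nonneg _)
  · refine (ha.mul_left M).of_norm_bounded fun k => ?_
    rw [norm_eq_abs, abs_mul, mul_comm]
    exact mul_le_mul_of_nonneg_right (hf_le _) (abs_nonneg _)

noncomputable def heatSeries (c ω φ : ℕ → ℝ) (y t : ℝ) : ℝ :=
  ∑' k, c k * exp (-ω k ^ 2 * t / 2) * sin (ω k * y + φ k)

namespace heatSeries

variable {c ω φ : ℕ → ℝ} {C : ℝ}

theorem summable_abs_mul_pow (hc : ∀ k, |c k| ≤ C)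
    (hω : ∀ s > 0, Summable fun k => (1 + ω k ^ 2) * exp (-ω k ^ 2 * s)) {t : ℝ} (ht : 0 < t)
    {m : ℕ} (hm : m ≤ 2) :
    Summable fun k => |c k * exp (-ω k ^ 2 * t / 2) * ω k ^ m| := by
  refine ((hω (t / 2) (by positivity)).mul_left C).of_nonneg_of_le (fun k => abs_nonneg _)
    fun k => ?_
  rw [abs_mul, abs_mul, abs_exp, abs_pow, mul_div_assoc]
  calc |c k| * exp (-ω k ^ 2 * (t / 2)) * |ω k| ^ m
      ≤ C * exp (-ω k ^ 2 * (t / 2)) * (1 + ω k ^ 2) := by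
        have hC : 0 ≤ C := (abs_nonneg _).trans (hc 0)
        gcongr
        · exact hc k
        · exact abs_pow_le_one_add_sq _ hm
    _ = C * ((1 + ω k ^ 2) * exp (-ω k ^ 2 * (t / 2))) := by ring

theorem hasDerivAt_space (hc : ∀ k, |c k| ≤ C)
    (hω : ∀ s > 0, Summable fun k => (1 + ω k ^ 2) * exp (-ω k ^ 2 * s)) {t : ℝ} (ht : 0 < t)
    (y : ℝ) :
    HasDerivAt (fun z => heatSeries c ω φ z t)
      (∑' k, c k * exp (-ω k ^ 2 * t / 2) * ω k * cos (ω k * y + φ k)) y :=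
  hasDerivAt_tsum_mul_comp_affine hasDerivAt_sin abs_sin_le_one abs_cos_le_one
    (by simpa using summable_abs_mul_pow hc hω ht (m := 0) (by norm_num))
    (by simpa using summable_abs_mul_pow hc hω ht (m := 1) (by norm_num)) y

theorem hasDerivAt_deriv_space (hc : ∀ k, |c k| ≤ C)
    (hω : ∀ s > 0, Summable fun k => (1 + ω k ^ 2) * exp (-ω k ^ 2 * s)) {t : ℝ} (ht : 0 < t)
    (y : ℝ) :
    HasDerivAt (deriv fun z => heatSeries c ω φ z t)
      (-∑' k, c k * exp (-ω k ^ 2 * t / 2) * ω k ^ 2 * sin (ω k * y + φ k)) y := by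
  have hderiv : (deriv fun z => heatSeries c ω φ z t) =
      fun z => ∑' k, c k * exp (-ω k ^ 2 * t / 2) * ω k * cos (ω k * z + φ k) :=
    funext fun z => (hasDerivAt_space hc hω ht z).deriv
  rw [hderiv, ← tsum_neg]
  refine (hasDerivAt_tsum_mul_comp_affine hasDerivAt_cos abs_cos_le_one
    (fun θ => (abs_neg _).trans_le (abs_sin_le_one θ))
    (by simpa using summable_abs_mul_pow hc hω ht (m := 1) (by norm_num))
    (by simpa [sq, mul_assoc] using summable_abs_mul_pow hc hω ht (m := 2) (by norm_num))
    y).congr_deriv (tsum_congr fun k => by ring)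

theorem hasDerivAt_time (hc : ∀ k, |c k| ≤ C)
    (hω : ∀ s > 0, Summable fun k => (1 + ω k ^ 2) * exp (-ω k ^ 2 * s)) (y : ℝ) {t : ℝ}
    (ht : 0 < t) :
    HasDerivAt (fun s => heatSeries c ω φ y s)
      (-(1 / 2) * ∑' k, c k * exp (-ω k ^ 2 * t / 2) * ω k ^ 2 * sin (ω k * y + φ k)) t := by
  have hC : 0 ≤ C := (abs_nonneg _).trans (hc 0)
  have hterm (k : ℕ) (s : ℝ) :
      HasDerivAt (fun s => c k * exp (-ω k ^ 2 * s / 2) * sin (ω k * y + φ k))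
        (c k * (exp (-ω k ^ 2 * s / 2) * (-ω k ^ 2 / 2)) * sin (ω k * y + φ k)) s := by
    have hexponent : HasDerivAt (fun s => -ω k ^ 2 * s / 2) (-ω k ^ 2 / 2) s := by
      simpa using ((hasDerivAt_id s).const_mul (-ω k ^ 2)).div_const 2
    exact (hexponent.exp.const_mul (c k)).mul_const _
  have hbound (k : ℕ) (s : ℝ) (hs : s ∈ Set.Ioi (t / 2)) :
      ‖c k * (exp (-ω k ^ 2 * s / 2) * (-ω k ^ 2 / 2)) * sin (ω k * y + φ k)‖ ≤
        C * ((1 + ω k ^ 2) * exp (-ω k ^ 2 * (t / 4))) := by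
    have hexp : exp (-ω k ^ 2 * s / 2) ≤ exp (-ω k ^ 2 * (t / 4)) := by
      rw [exp_le_exp]; nlinarith [sq_nonneg (ω k), Set.mem_Ioi.1 hs]
    rw [norm_eq_abs, abs_mul, abs_mul, abs_mul, abs_exp, abs_div, abs_neg, abs_two, abs_sq]
    calc |c k| * (exp (-ω k ^ 2 * s / 2) * (ω k ^ 2 / 2)) * |sin (ω k * y + φ k)|
        ≤ C * (exp (-ω k ^ 2 * (t / 4)) * (1 + ω k ^ 2)) * 1 := by
          gcongr
          · exact hc k
          · linarith [sq_nonneg (ω k)]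
          · exact abs_sin_le_one _
      _ = C * ((1 + ω k ^ 2) * exp (-ω k ^ 2 * (t / 4))) := by ring
  have hsummable : Summable fun k => c k * exp (-ω k ^ 2 * t / 2) * sin (ω k * y + φ k) := by
    refine (summable_abs_mul_pow hc hω ht (m := 0) (by norm_num)).of_norm_bounded fun k => ?_
    rw [norm_eq_abs, abs_mul _ (sin _), pow_zero, mul_one]
    exact mul_le_of_le_one_right (abs_nonneg _) (abs_sin_le_one _)
  refine (hasDerivAt_tsum_of_isPreconnected ((hω (t / 4) (by positivity)).mul_left C) isOpen_Ioi
    isPreconnected_Ioi (fun k s _ => hterm k s) hbound (y₀ := t) (by simpa using ht) hsummable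
    (by simpa using ht)).congr_deriv ?_
  rw [← tsum_mul_left]
  exact tsum_congr fun k => by ring

theorem heat_equation (hc : ∀ k, |c k| ≤ C)
    (hω : ∀ s > 0, Summable fun k => (1 + ω k ^ 2) * exp (-ω k ^ 2 * s)) (y : ℝ) {t : ℝ}
    (ht : 0 < t) :
    DifferentiableAt ℝ (fun s => heatSeries c ω φ y s) t ∧
    DifferentiableAt ℝ (fun z => heatSeries c ω φ z t) y ∧
    DifferentiableAt ℝ (deriv fun z => heatSeries c ω φ z t) y ∧
    deriv (fun s => heatSeries c ω φ y s) t =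
      (1 / 2) * deriv (deriv fun z => heatSeries c ω φ z t) y := by
  have htime := hasDerivAt_time (φ := φ) hc hω y ht
  have hspace₂ := hasDerivAt_deriv_space (φ := φ) hc hω ht y
  refine ⟨htime.differentiableAt, (hasDerivAt_space hc hω ht y).differentiableAt,
    hspace₂.differentiableAt, ?_⟩
  rw [htime.deriv, hspace₂.deriv]
  ring

end heatSeries

theorem f₁_eq_heatSeries (R x' : ℝ) :
    f₁ R x' = heatSeries (fun k => 1 / R * sin ((k + 1) * (π / (2 * R)) * (x' + R)))
      (fun k => (k + 1) * (π / (2 * R))) (fun k => (k + 1) * (π / (2 * R)) * R) := by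
  ext y t
  refine tsum_congr fun k => ?_
  ring_nf

theorem f₁_satisfies_heat_equation_general (R : ℝ) (hR : 0 < R) (x' : ℝ)
    (x t : ℝ) (ht : 0 < t) :
    DifferentiableAt ℝ (fun s => f₁ R x' x s) t ∧
    DifferentiableAt ℝ (fun y => f₁ R x' y t) x ∧
    DifferentiableAt ℝ (deriv (fun y => f₁ R x' y t)) x ∧
    deriv (fun s => f₁ R x' x s) t =
      (1 / 2) * deriv (deriv (fun y => f₁ R x' y t)) x := by
  rw [f₁_eq_heatSeries]
  refine heatSeries.heat_equation (C := |1 / R|) (fun k => ?_)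
    (fun s hs => summable_one_add_sq_mul_exp_neg_sq_mul (by positivity) hs) x ht
  rw [abs_mul]
  exact mul_le_of_le_one_right (abs_nonneg _) (abs_sin_le_one _)

/-- The Dirichlet heat kernel satisfies the one-dimensional heat equation
`∂f/∂t = (1/2) ∂²f/∂x²` at every interior point and every positive time;
in particular the time derivative, the first and the second spatial derivative
of the series exist at all such points. -/
theorem f₁_satisfies_heat_equation (R : ℝ) (hR : 0 < R) (x' : ℝ)
    (hx' : x' ∈ Set.Ioo (-R) R) (x t : ℝ) (hx : x ∈ Set.Ioo (-R) R) (ht : 0 < t) :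
    DifferentiableAt ℝ (fun s => f₁ R x' x s) t ∧
    DifferentiableAt ℝ (fun y => f₁ R x' y t) x ∧
    DifferentiableAt ℝ (deriv (fun y => f₁ R x' y t)) x ∧
    deriv (fun s => f₁ R x' x s) t =
      (1 / 2) * deriv (deriv (fun y => f₁ R x' y t)) x :=
  f₁_satisfies_heat_equation_general R hR x' x t ht
end

section
/- For every R > 0, all x, x' ∈ [−R, R], and every t > 0, the Dirichlet heat kernel is nonnegative: f₁(x, t; x') ≥ 0. (This is needed for f₁ to be the transition probability density of a Brownian motion killed at the endpoints ±R.) -/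
/-!
Discretise the interval by the path graph on `N` vertices. The sine matrix
`S i k = sin ((i + 1) (k + 1) π / (N + 1))` is symmetric and its columns are eigenvectors of the
adjacency matrix `A` for the distinct eigenvalues `μ k = 2 cos ((k + 1) π / (N + 1))`, so `S Sᵀ` is
diagonal and `∑ k, S i k * S j k * μ k ^ n = (A ^ n) i j * (S Sᵀ) j j ≥ 0`, as `A ^ n` counts walks.
Summing the exponential series, `∑ k, S i k * S j k * exp (τ μ k) ≥ 0` for `τ ≥ 0`. With
`τ = s (N + 1) ^ 2` and grid points `i + 1 = ⌊a (N + 1)⌋₊`, these discrete kernels converge termwise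
to the sine series of the heat kernel on `[0, 1]`, dominated by a geometric series, and
nonnegativity passes to the limit.
-/

open Real Filter Topology MeasureTheory

open Matrix SimpleGraph Function

section Spectral

variable {V : Type*} [Fintype V] [DecidableEq V] {S T : Matrix V V ℝ} {μ : V → ℝ}

lemma transpose_mul_self_apply_eq_zero (hT : Tᵀ = T) (hTS : T * S = S * diagonal μ)
    (hμ : Injective μ) {k l : V} (hkl : k ≠ l) : (Sᵀ * S) k l = 0 := by
  have hcomm : Sᵀ * S * diagonal μ = diagonal μ * (Sᵀ * S) := by
    have hST : Sᵀ * T = diagonal μ * Sᵀ := by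
      rw [← hT, ← transpose_mul, hTS, transpose_mul, diagonal_transpose]
    rw [Matrix.mul_assoc, ← hTS, ← Matrix.mul_assoc, hST, Matrix.mul_assoc]
  have h := congrFun₂ hcomm k l
  rw [mul_diagonal, diagonal_mul] at h
  have hprod : (Sᵀ * S) k l * (μ l - μ k) = 0 := by linear_combination h
  exact (mul_eq_zero.mp hprod).resolve_right (sub_ne_zero.mpr (hμ.ne hkl.symm))

variable {G : SimpleGraph V} [DecidableRel G.Adj]

lemma sum_mul_mul_pow_nonneg (hS : Sᵀ = S) (hAS : G.adjMatrix ℝ * S = S * diagonal μ)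
    (hμ : Injective μ) (n : ℕ) (i j : V) : 0 ≤ ∑ k, S i k * S j k * μ k ^ n := by
  have hsum : ∑ k, S i k * S j k * μ k ^ n = (G.adjMatrix ℝ ^ n * (Sᵀ * S)) i j :=
    calc ∑ k, S i k * S j k * μ k ^ n = (S * diagonal μ ^ n * Sᵀ) i j := by
          rw [mul_apply]
          simp only [diagonal_pow, mul_diagonal, Pi.pow_apply, transpose_apply]
          exact Finset.sum_congr rfl fun k _ => by ring
      _ = (G.adjMatrix ℝ ^ n * (Sᵀ * S)) i j := by
          rw [(SemiconjBy.pow_right hAS.symm n).eq, Matrix.mul_assoc, hS]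
  have hdiag : (G.adjMatrix ℝ ^ n * (Sᵀ * S)) i j
      = (G.adjMatrix ℝ ^ n) i j * (Sᵀ * S) j j := by
    rw [mul_apply, Finset.sum_eq_single j (fun l _ hlj => by
      rw [transpose_mul_self_apply_eq_zero (transpose_adjMatrix G) hAS hμ hlj, mul_zero])
      (by simp)]
  rw [hsum, hdiag, adjMatrix_pow_apply_eq_card_walk, mul_apply]
  exact mul_nonneg (Nat.cast_nonneg _) (Finset.sum_nonneg fun k _ => mul_self_nonneg _)

lemma sum_mul_mul_exp_nonneg (hS : Sᵀ = S) (hAS : G.adjMatrix ℝ * S = S * diagonal μ)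
    (hμ : Injective μ) {τ : ℝ} (hτ : 0 ≤ τ) (i j : V) :
    0 ≤ ∑ k, S i k * S j k * exp (τ * μ k) := by
  have hseries : ∑ k, S i k * S j k * exp (τ * μ k)
      = ∑' n : ℕ, τ ^ n / n.factorial * ∑ k, S i k * S j k * μ k ^ n := by
    simp only [exp_eq_exp_ℝ, NormedSpace.exp_eq_tsum_div, ← tsum_mul_left]
    rw [← Summable.tsum_finsetSum fun k _ => (Real.summable_pow_div_factorial _).mul_left _]
    refine tsum_congr fun n => ?_
    rw [Finset.mul_sum]
    exact Finset.sum_congr rfl fun k _ => by ring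
  rw [hseries]
  exact tsum_nonneg fun n => mul_nonneg (by positivity) (sum_mul_mul_pow_nonneg hS hAS hμ n i j)

end Spectral

instance (N : ℕ) : DecidableRel (pathGraph N).Adj := fun _ _ => decidable_of_iff' _ pathGraph_adj

lemma sum_pathGraph_adj_mul {N : ℕ} (f : ℕ → ℝ) (h0 : f 0 = 0) (hN : f (N + 1) = 0)
    (i : Fin N) :
    ∑ j : Fin N, (if (pathGraph N).Adj i j then 1 else 0) * f (j + 1) = f i + f (i + 2) := by
  have hsplit : ∀ j : ℕ, (if (i : ℕ) + 1 = j ∨ j + 1 = i then (1 : ℝ) else 0) * f (j + 1)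
      = (if (i : ℕ) + 1 = j then f (j + 1) else 0) + (if j + 1 = (i : ℕ) then f (j + 1) else 0) := by
    intro j; split_ifs <;> first | omega | ring
  simp only [pathGraph_adj]
  rw [Fin.sum_univ_eq_sum_range
      (fun j => (if (i : ℕ) + 1 = j ∨ j + 1 = i then (1 : ℝ) else 0) * f (j + 1)),
    Finset.sum_congr rfl fun j _ => hsplit j, Finset.sum_add_distrib, Finset.sum_ite_eq, add_comm]
  congr 1
  · obtain ⟨_ | m, hm⟩ := i
    · simp [h0]
    · rw [Finset.sum_eq_single m (by intro j _ hj; simp; omega) (by simp; omega)]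
      simp
  · split_ifs with h
    · rfl
    · rw [show (i : ℕ) + 2 = N + 1 by simp at h; omega, hN]

noncomputable def sineMatrix (N : ℕ) : Matrix (Fin N) (Fin N) ℝ :=
  of fun i j => sin ((i + 1 : ℝ) * (j + 1) * π / (N + 1))

lemma sineMatrix_transpose (N : ℕ) : (sineMatrix N)ᵀ = sineMatrix N := by
  ext i j
  simp only [transpose_apply, sineMatrix, of_apply, mul_comm ((j : ℝ) + 1)]

lemma pathGraph_adjMatrix_mul_sineMatrix (N : ℕ) :
    (pathGraph N).adjMatrix ℝ * sineMatrix N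
      = sineMatrix N * diagonal fun k : Fin N => 2 * cos ((k + 1 : ℝ) * π / (N + 1)) := by
  ext i k
  set β : ℝ := (k + 1 : ℝ) * π / (N + 1)
  have hentry : ∀ j : Fin N, sineMatrix N j k = sin (((j : ℕ) + 1 : ℕ) * β) := by
    intro j; simp only [sineMatrix, of_apply, β]; push_cast; ring_nf
  have hβ : ((N + 1 : ℕ) : ℝ) * β = (k + 1 : ℕ) * π := by
    simp only [β]; push_cast; field_simp
  rw [mul_apply, mul_diagonal, hentry]
  simp only [adjMatrix_apply, hentry]
  rw [sum_pathGraph_adj_mul (fun m => sin (m * β)) (by simp) (by simp only [hβ, sin_nat_mul_pi])]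
  have hprev : ((i : ℕ) : ℝ) * β = ((i + 1 : ℕ) : ℝ) * β - β := by push_cast; ring
  have hnext : (((i : ℕ) + 2 : ℕ) : ℝ) * β = ((i + 1 : ℕ) : ℝ) * β + β := by push_cast; ring
  rw [hprev, hnext, sin_sub, sin_add]
  ring

lemma injective_two_mul_cos (N : ℕ) :
    Injective fun k : Fin N => 2 * cos ((k + 1 : ℝ) * π / (N + 1)) := by
  intro k l hkl
  have hmem : ∀ m : Fin N, (m + 1 : ℝ) * π / (N + 1) ∈ Set.Icc 0 π := by
    intro m
    have : (m : ℝ) + 1 ≤ N + 1 := by have := m.isLt; norm_cast; omega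
    constructor
    · positivity
    · rw [div_le_iff₀ (by positivity)]; nlinarith [pi_pos]
  have := injOn_cos (hmem k) (hmem l) (by simpa using hkl)
  field_simp at this
  exact Fin.ext (by exact_mod_cast add_right_cancel this)

lemma sum_range_sin_mul_sin_mul_exp_nonneg {N p q : ℕ} (hp : p ≤ N + 1) (hq : q ≤ N + 1)
    {τ : ℝ} (hτ : 0 ≤ τ) :
    0 ≤ ∑ k ∈ Finset.range N, sin ((k + 1) * π * (p / (N + 1)))
      * sin ((k + 1) * π * (q / (N + 1))) * exp (τ * (2 * cos ((k + 1) * π / (N + 1)))) := by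
  have hgrid : ∀ m ≤ N + 1, (∀ k : ℕ, sin ((k + 1) * π * (m / (N + 1))) = 0)
      ∨ ∃ i : Fin N, m = i + 1 := by
    intro m hm
    rcases Nat.eq_zero_or_pos m with rfl | hm0
    · simp
    rcases hm.eq_or_lt with rfl | hmN
    · left; intro k
      rw [Nat.cast_add_one, div_self (by positivity), mul_one]
      exact_mod_cast sin_nat_mul_pi (k + 1)
    · exact Or.inr ⟨⟨m - 1, by omega⟩, by simp; omega⟩
  rcases hgrid p hp with hp0 | ⟨i, rfl⟩
  · simp [hp0]
  rcases hgrid q hq with hq0 | ⟨j, rfl⟩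
  · simp [hq0]
  convert sum_mul_mul_exp_nonneg (sineMatrix_transpose N) (pathGraph_adjMatrix_mul_sineMatrix N)
    (injective_two_mul_cos N) hτ i j using 1
  rw [← Fin.sum_univ_eq_sum_range]
  refine Finset.sum_congr rfl fun k _ => ?_
  simp only [sineMatrix, of_apply]
  push_cast
  ring_nf

lemma tendsto_mul_sin_div_atTop (c : ℝ) :
    Tendsto (fun x : ℝ => x * sin (c / x)) atTop (𝓝 c) := by
  have hsinc : Tendsto (fun x : ℝ => c * sinc (c / x)) atTop (𝓝 (c * sinc 0)) :=
    ((continuous_sinc.tendsto 0).comp (tendsto_const_nhds.div_atTop tendsto_id)).const_mul c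
  rw [sinc_zero, mul_one] at hsinc
  refine hsinc.congr' ?_
  filter_upwards [eventually_gt_atTop 0] with x hx
  rcases eq_or_ne c 0 with rfl | hc
  · simp
  · rw [sinc_of_ne_zero (by positivity)]
    field_simp

lemma tendsto_floor_mul_div_natCast_add_one {a : ℝ} (ha : 0 ≤ a) :
    Tendsto (fun N : ℕ => (⌊a * (N + 1)⌋₊ : ℝ) / (N + 1)) atTop (𝓝 a) :=
  (tendsto_nat_floor_mul_div_atTop ha).comp
    (tendsto_atTop_add_const_right _ 1 tendsto_natCast_atTop_atTop)

/-- The `k`-th term of the sine expansion of the kernel of `exp (s (N + 1) ^ 2 (A - 2))`, `A` the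
adjacency matrix of the path on `N` vertices, between the grid points `⌊a (N + 1)⌋₊` and
`⌊b (N + 1)⌋₊`. -/
noncomputable def discreteHeatTerm (s a b : ℝ) (N k : ℕ) : ℝ :=
  if k < N then
    sin ((k + 1) * π * (⌊a * (N + 1)⌋₊ / (N + 1)))
      * sin ((k + 1) * π * (⌊b * (N + 1)⌋₊ / (N + 1)))
      * exp (-(s * (2 * (N + 1) * sin ((k + 1) * π / (2 * (N + 1)))) ^ 2))
  else 0

lemma tsum_discreteHeatTerm_nonneg {s a b : ℝ} (hs : 0 ≤ s) (ha : a ≤ 1) (hb : b ≤ 1) (N : ℕ) :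
    0 ≤ ∑' k, discreteHeatTerm s a b N k := by
  have hfloor : ∀ {c : ℝ}, c ≤ 1 → ⌊c * (N + 1)⌋₊ ≤ N + 1 := fun hc =>
    Nat.floor_le_of_le (by push_cast; nlinarith)
  have hexp : ∀ k : ℕ, exp (-(s * (2 * (N + 1) * sin ((k + 1) * π / (2 * (N + 1)))) ^ 2))
      = exp (-(2 * (s * (N + 1) ^ 2)))
        * exp (s * (N + 1) ^ 2 * (2 * cos ((k + 1) * π / (N + 1)))) := by
    intro k
    have hcos : cos ((k + 1) * π / (N + 1)) = 1 - 2 * sin ((k + 1) * π / (2 * (N + 1))) ^ 2 := by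
      rw [← cos_two_mul_eq_one_sub]; congr 1; field_simp
    rw [← exp_add, hcos]; congr 1; ring
  rw [tsum_eq_sum (s := Finset.range N) fun k hk => by
    rw [discreteHeatTerm, if_neg (by simpa using hk)]]
  rw [Finset.sum_congr rfl fun k hk => by rw [discreteHeatTerm, if_pos (by simpa using hk), hexp,
    mul_left_comm _ (exp _)], ← Finset.mul_sum]
  exact mul_nonneg (exp_pos _).le
    (sum_range_sin_mul_sin_mul_exp_nonneg (hfloor ha) (hfloor hb) (by positivity))

lemma norm_discreteHeatTerm_le {s : ℝ} (hs : 0 ≤ s) (a b : ℝ) (N k : ℕ) :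
    ‖discreteHeatTerm s a b N k‖ ≤ exp (-(4 * s)) ^ k := by
  unfold discreteHeatTerm
  split_ifs with hkN
  · set x : ℝ := (k + 1) * π / (2 * (N + 1))
    have hx0 : 0 ≤ x := by positivity
    have hxπ : x ≤ π / 2 := by
      have : (k : ℝ) + 1 ≤ N + 1 := by norm_cast; omega
      rw [div_le_div_iff₀ (by positivity) two_pos]; nlinarith [pi_pos]
    have hsin : 2 * (k + 1) ≤ 2 * (N + 1) * sin x := by
      have := mul_le_sin hx0 hxπ
      calc (2 : ℝ) * (k + 1) = 2 * (N + 1) * (2 / π * x) := by simp only [x]; field_simp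
        _ ≤ 2 * (N + 1) * sin x := by gcongr
    have hexp : exp (-(s * (2 * (N + 1) * sin x) ^ 2)) ≤ exp (-(4 * s)) ^ k := by
      have hsq : 4 * (k : ℝ) ≤ (2 * (N + 1) * sin x) ^ 2 := by
        nlinarith [pow_le_pow_left₀ (by positivity) hsin 2]
      rw [← exp_nat_mul, exp_le_exp]
      nlinarith [mul_le_mul_of_nonneg_left hsq hs]
    rw [norm_mul, norm_mul, Real.norm_of_nonneg (exp_pos _).le]
    calc ‖sin _‖ * ‖sin _‖ * exp _ ≤ 1 * 1 * exp (-(s * (2 * (N + 1) * sin x) ^ 2)) := by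
          gcongr <;> exact abs_sin_le_one _
      _ ≤ exp (-(4 * s)) ^ k := by rw [one_mul, one_mul]; exact hexp
  · rw [norm_zero]; positivity

lemma tendsto_discreteHeatTerm (s : ℝ) {a b : ℝ} (ha : 0 ≤ a) (hb : 0 ≤ b) (k : ℕ) :
    Tendsto (fun N => discreteHeatTerm s a b N k) atTop
      (𝓝 (sin ((k + 1) * π * a) * sin ((k + 1) * π * b) * exp (-(s * ((k + 1) * π) ^ 2)))) := by
  have hsin : ∀ {c : ℝ}, 0 ≤ c →
      Tendsto (fun N : ℕ => sin ((k + 1) * π * (⌊c * (N + 1)⌋₊ / (N + 1))))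
        atTop (𝓝 (sin ((k + 1) * π * c))) := fun hc =>
    (continuous_sin.tendsto _).comp ((tendsto_floor_mul_div_natCast_add_one hc).const_mul _)
  have hscaled : Tendsto (fun N : ℕ => 2 * (N + 1) * sin ((k + 1) * π / (2 * (N + 1)))) atTop
      (𝓝 ((k + 1) * π)) :=
    (tendsto_mul_sin_div_atTop _).comp <| tendsto_natCast_atTop_atTop.atTop_add tendsto_const_nhds
      |>.const_mul_atTop two_pos
  refine Tendsto.congr' ?_ (((hsin ha).mul (hsin hb)).mul
    ((continuous_exp.tendsto _).comp ((hscaled.pow 2).const_mul s).neg))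
  filter_upwards [eventually_gt_atTop k] with N hN
  simp [discreteHeatTerm, hN]

theorem tsum_sin_mul_sin_mul_exp_nonneg {s a b : ℝ} (hs : 0 < s) (ha : a ∈ Set.Icc 0 1)
    (hb : b ∈ Set.Icc 0 1) :
    0 ≤ ∑' k : ℕ, sin ((k + 1) * π * a) * sin ((k + 1) * π * b)
      * exp (-(s * ((k + 1) * π) ^ 2)) :=
  ge_of_tendsto
    (tendsto_tsum_of_dominated_convergence
      (summable_geometric_of_lt_one (exp_pos _).le (exp_lt_one_iff.mpr (by linarith)))
      (tendsto_discreteHeatTerm s ha.1 hb.1)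
      (Eventually.of_forall (norm_discreteHeatTerm_le hs.le a b)))
    (Eventually.of_forall (tsum_discreteHeatTerm_nonneg hs.le ha.2 hb.2))

/-- The Dirichlet heat kernel is nonnegative: for all `x, x' ∈ [-R, R]` and `t > 0`,
`f₁(x, t; x') ≥ 0`. -/
theorem f₁_nonneg (R : ℝ) (hR : 0 < R) (x x' : ℝ)
    (hx : x ∈ Set.Icc (-R) R) (hx' : x' ∈ Set.Icc (-R) R) (t : ℝ) (ht : 0 < t) :
    0 ≤ f₁ R x' x t := by
  have hunit : ∀ {y : ℝ}, y ∈ Set.Icc (-R) R → (y + R) / (2 * R) ∈ Set.Icc 0 1 := fun hy =>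
    ⟨div_nonneg (by linarith [hy.1]) (by positivity),
      div_le_one_of_le₀ (by linarith [hy.2]) (by positivity)⟩
  have hrescale : f₁ R x' x t = 1 / R * ∑' k : ℕ, sin ((k + 1) * π * ((x' + R) / (2 * R)))
      * sin ((k + 1) * π * ((x + R) / (2 * R))) * exp (-(t / (8 * R ^ 2) * ((k + 1) * π) ^ 2)) := by
    rw [f₁, ← tsum_mul_left]
    refine tsum_congr fun k => ?_
    rw [mul_div_assoc, mul_div_assoc]
    ring_nf
  rw [hrescale]
  exact mul_nonneg (by positivity)
    (tsum_sin_mul_sin_mul_exp_nonneg (by positivity) (hunit hx') (hunit hx))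
end

section
/- For every R > 0 and t > 0, the survival probability of the center-started kernel admits the explicit series S(t) := ∫_{−R}^{R} f₁(x, t; 0) dx = (4/π) · Σ_{j=0}^∞ ((−1)^j/(2j+1)) · exp(−(2j+1)²π² t/(8R²)); in particular the spatial integral of the series may be computed term by term. -/
/-!
The series is dominated by the summable sequence `|R|⁻¹ exp (-λ_k t / 2)`, so it may be
integrated term by term. For the source `x' = 0` the factor `sin (m π / 2)` of the mode with
wave number `m` kills the even modes, equals `(-1) ^ j` for `m = 2 j + 1`, and the odd mode
integrates over `(-R, R)` to `4 R / (m π)`.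
-/

open Real Filter Topology MeasureTheory

theorem intervalIntegral.hasSum_integral_of_continuous_of_norm_le {ι E : Type*} [Countable ι]
    [NormedAddCommGroup E] [NormedSpace ℝ E] [CompleteSpace E] {F : ι → ℝ → E} {B : ι → ℝ}
    (hF : ∀ i, Continuous (F i)) (hFB : ∀ i x, ‖F i x‖ ≤ B i) (hB : Summable B) (a b : ℝ) :
    HasSum (fun i => ∫ x in a..b, F i x) (∫ x in a..b, ∑' i, F i x) :=
  hasSum_integral_of_dominated_convergence (fun i _ => B i)
    (fun i => (hF i).aestronglyMeasurable) (fun i => .of_forall fun x _ => hFB i x)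
    (.of_forall fun _ _ => hB) intervalIntegrable_const
    (.of_forall fun x _ => (hB.of_norm_bounded (hFB · x)).hasSum)

theorem integral_sin_mul_add_self {ω : ℝ} (hω : ω ≠ 0) (R : ℝ) :
    ∫ x in (-R)..R, sin (ω * (x + R)) = (1 - cos (2 * R * ω)) / ω := by
  simp_rw [mul_add]
  rw [intervalIntegral.integral_comp_mul_add _ hω, integral_sin, smul_eq_mul]
  ring_nf
  rw [cos_zero]
  field_simp

noncomputable def heatTerm (R x' t : ℝ) (k : ℕ) (x : ℝ) : ℝ :=
  (1 / R) * sin (((k : ℝ) + 1) * π * (x' + R) / (2 * R)) *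
    sin (((k : ℝ) + 1) * π * (x + R) / (2 * R)) *
    exp (-((((k : ℝ) + 1) * π) ^ 2 / (4 * R ^ 2)) * t / 2)

theorem continuous_heatTerm (R x' t : ℝ) (k : ℕ) : Continuous (heatTerm R x' t k) := by
  unfold heatTerm; fun_prop

theorem norm_heatTerm_le (R x' t : ℝ) (k : ℕ) (x : ℝ) :
    ‖heatTerm R x' t k x‖ ≤ |R|⁻¹ * exp (-((((k : ℝ) + 1) * π) ^ 2 / (4 * R ^ 2)) * t / 2) := by
  rw [heatTerm, norm_mul, norm_mul, norm_mul, norm_of_nonneg (exp_pos _).le, one_div, norm_inv,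
    norm_eq_abs]
  gcongr
  calc _ ≤ |R|⁻¹ * 1 * 1 := by gcongr <;> exact abs_sin_le_one _
    _ = |R|⁻¹ := by ring

section

variable {R t : ℝ}

theorem summable_exp_heat_exponent (hR : R ≠ 0) (ht : 0 < t) :
    Summable fun k : ℕ => exp (-((((k : ℝ) + 1) * π) ^ 2 / (4 * R ^ 2)) * t / 2) := by
  have hc : -(π ^ 2 * t / (8 * R ^ 2)) < 0 := by
    have := pi_pos; have := pow_pos (abs_pos.2 hR) 2; rw [sq_abs] at this
    simp only [neg_lt_zero]; positivity
  convert summable_exp_nat_mul_of_ge hc (f := fun k : ℕ => ((k : ℝ) + 1) ^ 2)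
    (fun k => by nlinarith) using 3 with k
  field_simp
  ring

theorem hasSum_integral_heatTerm (hR : R ≠ 0) (ht : 0 < t) (x' a b : ℝ) :
    HasSum (fun k => ∫ x in a..b, heatTerm R x' t k x) (∫ x in a..b, f₁ R x' x t) :=
  intervalIntegral.hasSum_integral_of_continuous_of_norm_le (continuous_heatTerm R x' t)
    (norm_heatTerm_le R x' t) ((summable_exp_heat_exponent hR ht).mul_left _) a b

theorem heatTerm_center_odd (hR : R ≠ 0) (j : ℕ) (x : ℝ) :
    heatTerm R 0 t (2 * j + 1) x = 0 := by
  have : ((2 * j + 1 : ℕ) + 1 : ℝ) * π * (0 + R) / (2 * R) = (j + 1 : ℕ) * π := by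
    push_cast; field_simp; ring
  rw [heatTerm, this, sin_nat_mul_pi]
  ring

theorem integral_heatTerm_center_even (hR : R ≠ 0) (j : ℕ) :
    ∫ x in (-R)..R, heatTerm R 0 t (2 * j) x =
      (4 / π) * ((-1 : ℝ) ^ j / (2 * (j : ℝ) + 1) *
        exp (-((2 * (j : ℝ) + 1) ^ 2 * π ^ 2 * t) / (8 * R ^ 2))) := by
  have hk : ((2 * j : ℕ) + 1 : ℝ) = 2 * j + 1 := by push_cast; ring
  have hω : (2 * (j : ℝ) + 1) * π / (2 * R) ≠ 0 := by positivity
  have hsin : sin ((2 * (j : ℝ) + 1) * π * (0 + R) / (2 * R)) = (-1) ^ j := by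
    rw [zero_add, ← cos_nat_mul_pi, ← sin_add_pi_div_two]; congr 1; field_simp
  have hcos : cos (2 * R * ((2 * (j : ℝ) + 1) * π / (2 * R))) = -1 := by
    rw [← cos_nat_mul_two_pi_add_pi j]; congr 1; field_simp
  have hmode : ∀ x, sin ((2 * (j : ℝ) + 1) * π * (x + R) / (2 * R)) =
      sin ((2 * (j : ℝ) + 1) * π / (2 * R) * (x + R)) := fun x => by ring_nf
  have hexp : -(((2 * (j : ℝ) + 1) * π) ^ 2 / (4 * R ^ 2)) * t / 2 =
      -((2 * (j : ℝ) + 1) ^ 2 * π ^ 2 * t) / (8 * R ^ 2) := by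
    field_simp; ring
  have hterm : ∀ x, heatTerm R 0 t (2 * j) x = (1 / R * (-1) ^ j *
      exp (-((2 * (j : ℝ) + 1) ^ 2 * π ^ 2 * t) / (8 * R ^ 2))) *
        sin ((2 * (j : ℝ) + 1) * π / (2 * R) * (x + R)) := fun x => by
    rw [heatTerm, hk, hsin, hmode, hexp]; ring
  simp_rw [hterm]
  rw [intervalIntegral.integral_const_mul, integral_sin_mul_add_self hω, hcos]
  field_simp
  ring

end

/-- The survival probability of the center-started kernel admits the explicit series
`∫_{-R}^{R} f₁(x, t; 0) dx = (4/π) ∑_{j≥0} ((-1)^j/(2j+1)) exp(-(2j+1)²π²t/(8R²))`. -/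
theorem survival_probability_series (R : ℝ) (hR : 0 < R) (t : ℝ) (ht : 0 < t) :
    ∫ x in (-R)..R, f₁ R 0 x t =
      (4 / π) * ∑' j : ℕ, ((-1 : ℝ) ^ j / (2 * (j : ℝ) + 1)) *
        Real.exp (-((2 * (j : ℝ) + 1) ^ 2 * π ^ 2 * t) / (8 * R ^ 2)) := by
  have hodd : ∀ k ∉ Set.range (2 * · : ℕ → ℕ), ∫ x in (-R)..R, heatTerm R 0 t k x = 0 := by
    rintro k hk
    have hk_not_even : ¬Even k := fun ⟨j, hj⟩ => hk ⟨j, by dsimp only; omega⟩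
    obtain ⟨j, rfl⟩ := Nat.not_even_iff_odd.1 hk_not_even
    simp [heatTerm_center_odd hR.ne']
  have hsum := ((mul_right_injective₀ two_ne_zero).hasSum_iff hodd).2
    (hasSum_integral_heatTerm hR.ne' ht 0 (-R) R)
  simp only [Function.comp_def, integral_heatTerm_center_even hR.ne'] at hsum
  rw [← hsum.tsum_eq, tsum_mul_left]
end

section
/- (Exit density as boundary probability flux, Eq. (2.7) of the paper for the 1-ball.) For every R > 0 and t > 0, the function x ↦ f₁(x, t; 0) is differentiable at x = R and at x = −R, and the total boundary outflux equals the exit-time density: f₁^exit(t) = (1/2) · ∂f₁/∂x(−R, t; 0) − (1/2) · ∂f₁/∂x(R, t; 0). -/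
open Real Filter Topology MeasureTheory

/-- Exit-time density of a standard Brownian motion started at the center of
`(-R, R)` and killed at `±R`. -/
noncomputable def f₁exit (R t : ℝ) : ℝ :=
  (π / (2 * R ^ 2)) * ∑' k : ℕ, (-1 : ℝ) ^ k * (2 * (k : ℝ) + 1) *
    Real.exp (-((2 * (k : ℝ) + 1) ^ 2 * π ^ 2 * t) / (8 * R ^ 2))

/-!
For fixed `t` and source `x'`, `x ↦ f₁(x, t; x')` is a sine series `∑ aₖ sin (ωₖ x + ωₖ R)`
whose coefficients carry the Gaussian factor `exp (-ωₖ² t / 2)`. For `t > 0` the differentiated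
series `∑ aₖ ωₖ cos (ωₖ x + ωₖ R)` is dominated by a summable Gaussian sequence, so the series may
be differentiated term by term. At `x = -R` every cosine equals `1` and at `x = R` it equals
`(-1)^(k+1)`, so half the difference of the two boundary derivatives keeps exactly the
even-indexed terms `a₂ₘ ω₂ₘ`. For the source `x' = 0`, `sin ((2m+1)π/2) = (-1)^m` turns these
into the terms of `f₁^exit`.
-/

theorem hasDerivAt_tsum_mul_sin {a ω φ : ℕ → ℝ} (ha : Summable fun k => |a k|)
    (haω : Summable fun k => |a k * ω k|) (x : ℝ) :
    HasDerivAt (fun y => ∑' k, a k * Real.sin (ω k * y + φ k))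
      (∑' k, a k * ω k * Real.cos (ω k * x + φ k)) x := by
  refine hasDerivAt_tsum (g := fun k y => a k * Real.sin (ω k * y + φ k))
    (g' := fun k y => a k * ω k * Real.cos (ω k * y + φ k)) haω
    (fun k y => ?_) (fun k y => ?_) (y₀ := 0) ?_ x
  · simpa [mul_assoc, mul_comm (ω k)] using
      ((((hasDerivAt_id y).const_mul (ω k)).add_const (φ k)).sin).const_mul (a k)
  · rw [Real.norm_eq_abs, abs_mul]
    exact mul_le_of_le_one_right (abs_nonneg _) (Real.abs_cos_le_one _)
  · refine Summable.of_norm_bounded ha fun k => ?_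
    rw [Real.norm_eq_abs, abs_mul]
    exact mul_le_of_le_one_right (abs_nonneg _) (Real.abs_sin_le_one _)

theorem tsum_even_eq_tsum_add_alternating_div_two {b : ℕ → ℝ} (hb : Summable b) :
    ∑' m, b (2 * m) = (∑' k, b k + ∑' k, (-1) ^ k * b k) / 2 := by
  set g : ℕ → ℝ := fun k => (b k + (-1) ^ k * b k) / 2
  have hg_even : ∀ m, g (2 * m) = b (2 * m) := fun m => by
    simp only [g, pow_mul, neg_one_sq, one_pow]; ring
  have hg_odd : ∀ m, g (2 * m + 1) = 0 := fun m => by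
    simp only [g, pow_succ, pow_mul]; ring
  have hsum : ∑' k, g k = (∑' k, b k + ∑' k, (-1) ^ k * b k) / 2 := by
    rw [tsum_div_const, hb.tsum_add hb.alternating]
  have he : Summable fun m => g (2 * m) :=
    (hb.comp_injective (mul_right_injective₀ two_ne_zero)).congr fun m => (hg_even m).symm
  have ho : Summable fun m => g (2 * m + 1) := by simpa only [hg_odd] using summable_zero
  rw [← hsum, ← tsum_even_add_odd he ho, funext hg_even, funext hg_odd, tsum_zero, add_zero]

theorem summable_pow_mul_exp_neg_mul_sq {c : ℝ} (hc : 0 < c) (n : ℕ) :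
    Summable fun k : ℕ => ((k : ℝ) + 1) ^ n * Real.exp (-c * ((k : ℝ) + 1) ^ 2) := by
  have h := (summable_nat_add_iff 1).2 (Real.summable_pow_mul_exp_neg_nat_mul n hc)
  push_cast at h
  refine h.of_nonneg_of_le (fun k => by positivity) fun k => ?_
  have hk : (0 : ℝ) ≤ k := k.cast_nonneg
  refine mul_le_mul_of_nonneg_left (Real.exp_le_exp.2 ?_) (by positivity)
  nlinarith [mul_nonneg (mul_nonneg hc.le hk) (by positivity : (0 : ℝ) ≤ k + 1)]

/-- `ωₖ = √λₖ₊₁`: the summation index of `f₁` starts at `0`. -/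
noncomputable def dirichletFreq (R : ℝ) (k : ℕ) : ℝ := ((k : ℝ) + 1) * π / (2 * R)

noncomputable def heatCoeff (R x' t : ℝ) (k : ℕ) : ℝ :=
  1 / R * Real.sin (dirichletFreq R k * (x' + R)) * Real.exp (-dirichletFreq R k ^ 2 * t / 2)

theorem f₁_eq_tsum_heatCoeff_mul_sin (R x' x t : ℝ) :
    f₁ R x' x t =
      ∑' k, heatCoeff R x' t k * Real.sin (dirichletFreq R k * x + dirichletFreq R k * R) := by
  refine tsum_congr fun k => ?_
  unfold heatCoeff dirichletFreq
  ring_nf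

theorem abs_heatCoeff_le {R : ℝ} (hR : 0 < R) (x' t : ℝ) (k : ℕ) :
    |heatCoeff R x' t k| ≤ 1 / R * Real.exp (-(π ^ 2 * t / (8 * R ^ 2)) * ((k : ℝ) + 1) ^ 2) := by
  have hexp : -dirichletFreq R k ^ 2 * t / 2 = -(π ^ 2 * t / (8 * R ^ 2)) * ((k : ℝ) + 1) ^ 2 := by
    unfold dirichletFreq; ring
  rw [heatCoeff, hexp, abs_mul, abs_mul, abs_of_pos (by positivity : 0 < 1 / R),
    abs_of_pos (Real.exp_pos _)]
  exact mul_le_mul_of_nonneg_right (mul_le_of_le_one_right (by positivity)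
    (Real.abs_sin_le_one _)) (Real.exp_pos _).le

theorem summable_abs_heatCoeff {R t : ℝ} (hR : 0 < R) (ht : 0 < t) (x' : ℝ) :
    Summable fun k => |heatCoeff R x' t k| := by
  have hc : 0 < π ^ 2 * t / (8 * R ^ 2) := by positivity
  refine ((summable_pow_mul_exp_neg_mul_sq hc 0).mul_left (1 / R)).of_nonneg_of_le
    (fun k => abs_nonneg _) fun k => ?_
  simpa only [pow_zero, one_mul] using abs_heatCoeff_le hR x' t k

theorem summable_abs_heatCoeff_mul_dirichletFreq {R t : ℝ} (hR : 0 < R) (ht : 0 < t) (x' : ℝ) :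
    Summable fun k => |heatCoeff R x' t k * dirichletFreq R k| := by
  have hc : 0 < π ^ 2 * t / (8 * R ^ 2) := by positivity
  refine ((summable_pow_mul_exp_neg_mul_sq hc 1).mul_left
    (1 / R * (π / (2 * R)))).of_nonneg_of_le (fun k => abs_nonneg _) fun k => ?_
  have hfreq : |dirichletFreq R k| = π / (2 * R) * ((k : ℝ) + 1) ^ 1 := by
    rw [abs_of_pos (by unfold dirichletFreq; positivity), dirichletFreq]; ring
  calc |heatCoeff R x' t k * dirichletFreq R k|
      ≤ 1 / R * Real.exp (-(π ^ 2 * t / (8 * R ^ 2)) * ((k : ℝ) + 1) ^ 2) *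
          (π / (2 * R) * ((k : ℝ) + 1) ^ 1) := by
        rw [abs_mul, hfreq]
        exact mul_le_mul_of_nonneg_right (abs_heatCoeff_le hR x' t k) (by positivity)
    _ = _ := by ring

theorem hasDerivAt_f₁ {R t : ℝ} (hR : 0 < R) (ht : 0 < t) (x' x : ℝ) :
    HasDerivAt (fun y => f₁ R x' y t)
      (∑' k, heatCoeff R x' t k * dirichletFreq R k *
        Real.cos (dirichletFreq R k * x + dirichletFreq R k * R)) x := by
  simpa only [f₁_eq_tsum_heatCoeff_mul_sin] using hasDerivAt_tsum_mul_sin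
    (summable_abs_heatCoeff hR ht x') (summable_abs_heatCoeff_mul_dirichletFreq hR ht x') x

theorem tsum_heatCoeff_boundary_flux {R t : ℝ} (hR : 0 < R) (ht : 0 < t) (x' : ℝ) :
    1 / 2 * (∑' k, heatCoeff R x' t k * dirichletFreq R k *
        Real.cos (dirichletFreq R k * -R + dirichletFreq R k * R)) -
      1 / 2 * (∑' k, heatCoeff R x' t k * dirichletFreq R k *
        Real.cos (dirichletFreq R k * R + dirichletFreq R k * R)) =
      ∑' m, heatCoeff R x' t (2 * m) * dirichletFreq R (2 * m) := by
  have hcos_left : ∀ k, Real.cos (dirichletFreq R k * -R + dirichletFreq R k * R) = 1 := by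
    simp
  have hcos_right : ∀ k : ℕ,
      Real.cos (dirichletFreq R k * R + dirichletFreq R k * R) = -(-1) ^ k := fun k => by
    have harg : dirichletFreq R k * R + dirichletFreq R k * R = ((k + 1 : ℕ) : ℝ) * π := by
      unfold dirichletFreq; push_cast; field_simp; ring
    rw [harg, Real.cos_nat_mul_pi, pow_succ]; ring
  simp only [hcos_left, hcos_right]
  simp only [mul_one, mul_neg, tsum_neg]
  rw [tsum_even_eq_tsum_add_alternating_div_two (summable_abs_heatCoeff_mul_dirichletFreq hR ht x').of_abs]
  simp only [mul_comm ((-1 : ℝ) ^ _)]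
  ring

theorem heatCoeff_two_mul_mul_dirichletFreq {R : ℝ} (hR : R ≠ 0) (t : ℝ) (m : ℕ) :
    heatCoeff R 0 t (2 * m) * dirichletFreq R (2 * m) =
      π / (2 * R ^ 2) * ((-1) ^ m * (2 * (m : ℝ) + 1) *
        Real.exp (-((2 * (m : ℝ) + 1) ^ 2 * π ^ 2 * t) / (8 * R ^ 2))) := by
  have hsin : Real.sin (dirichletFreq R (2 * m) * (0 + R)) = (-1) ^ m := by
    have harg : dirichletFreq R (2 * m) * (0 + R) = m * π + π / 2 := by
      unfold dirichletFreq; push_cast; field_simp; ring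
    rw [harg, Real.sin_add_pi_div_two, Real.cos_nat_mul_pi]
  have hexp : -dirichletFreq R (2 * m) ^ 2 * t / 2 =
      -((2 * (m : ℝ) + 1) ^ 2 * π ^ 2 * t) / (8 * R ^ 2) := by
    unfold dirichletFreq; push_cast; field_simp; ring
  rw [heatCoeff, hsin, hexp, dirichletFreq]
  push_cast
  field_simp

/-- The exit density is the total boundary probability outflux: `x ↦ f₁(x, t; 0)` is
differentiable at `x = ±R` and
`f₁^exit(t) = (1/2) ∂f₁/∂x(-R, t; 0) - (1/2) ∂f₁/∂x(R, t; 0)`. -/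
theorem exit_density_eq_boundary_flux (R : ℝ) (hR : 0 < R) (t : ℝ) (ht : 0 < t) :
    DifferentiableAt ℝ (fun x => f₁ R 0 x t) R ∧
    DifferentiableAt ℝ (fun x => f₁ R 0 x t) (-R) ∧
    f₁exit R t =
      (1 / 2) * deriv (fun x => f₁ R 0 x t) (-R) -
        (1 / 2) * deriv (fun x => f₁ R 0 x t) R := by
  have hD := hasDerivAt_f₁ hR ht 0
  refine ⟨(hD R).differentiableAt, (hD (-R)).differentiableAt, ?_⟩
  rw [(hD R).deriv, (hD (-R)).deriv, tsum_heatCoeff_boundary_flux hR ht, f₁exit, ← tsum_mul_left]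
  exact tsum_congr fun m => (heatCoeff_two_mul_mul_dirichletFreq hR.ne' t m).symm
end
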